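/- Let m ≥ 2. Every (m+2)-angulation Γ of the annulus A(p,q) contains at least two distinct σ-orbits of bridging arcs. -/

import Mathlib

namespace ClusterAnnulus

/-! ## The combinatorial model of the annulus `A(p,q)`

We model the annulus `A(p,q)` by the strip `S = ℝ × [0,1]` together with the shift `σ`
acting by `σ(x,0) = (x + m·p, 0)` on the bottom boundary and `σ(x,1) = (x + m·q, 1)` on
the top boundary.  Marked points are `(i,0)` and `(j,1)` for integers `i, j`. -/

/-- Marked points on the two boundary lines of the strip: `Pt.bot x` is the point
`(x,0)` and `Pt.top x` is the point `(x,1)`. -/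
inductive Pt : Type
  | bot : ℤ → Pt
  | top : ℤ → Pt
  deriving DecidableEq

/-- Combinatorial (isotopy classes of) arcs in the strip:
* `bridging x y` is the straight segment from `(x,0)` to `(y,1)`;
* `botPeriph u v` is an embedded arc in the open strip joining `(u,0)` to `(v,0)`;
* `topPeriph u v` is an embedded arc in the open strip joining `(u,1)` to `(v,1)`. -/
inductive Arc : Type
  | bridging : ℤ → ℤ → Arc
  | botPeriph : ℤ → ℤ → Arc
  | topPeriph : ℤ → ℤ → Arc
  deriving DecidableEq

/-- An arc is bridging if it joins the two boundary components. -/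
def Arc.IsBridging : Arc → Prop
  | .bridging _ _ => True
  | _ => False

/-- `m`-arc conditions: a bridging arc `β(x,y)` requires `x ≡ y (mod m)`; a peripheral
arc `π(u,v)` requires `v = u + k·m + 1` for some `k ≥ 1`. -/
def IsMArc (m : ℕ) : Arc → Prop
  | .bridging x y => x ≡ y [ZMOD (m : ℤ)]
  | .botPeriph u v => ∃ k : ℤ, 1 ≤ k ∧ v = u + k * (m : ℤ) + 1
  | .topPeriph u v => ∃ k : ℤ, 1 ≤ k ∧ v = u + k * (m : ℤ) + 1

/-- The combinatorial crossing relation between arcs. -/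
def Cross : Arc → Arc → Prop
  | .bridging x y, .bridging x' y' => (x - x') * (y - y') < 0
  | .bridging x _, .botPeriph u v => u < x ∧ x < v
  | .botPeriph u v, .bridging x _ => u < x ∧ x < v
  | .bridging _ y, .topPeriph u v => u < y ∧ y < v
  | .topPeriph u v, .bridging _ y => u < y ∧ y < v
  | .botPeriph u v, .botPeriph u' v' => (u < u' ∧ u' < v ∧ v < v') ∨ (u' < u ∧ u < v' ∧ v' < v)
  | .topPeriph u v, .topPeriph u' v' => (u < u' ∧ u' < v ∧ v < v') ∨ (u' < u ∧ u < v' ∧ v' < v)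
  | .botPeriph _ _, .topPeriph _ _ => False
  | .topPeriph _ _, .botPeriph _ _ => False

/-- The `n`-th power of the shift `σ` acting on arcs: it translates bottom endpoints
by `n·m·p` and top endpoints by `n·m·q`. -/
def shiftArc (m p q : ℕ) (n : ℤ) : Arc → Arc
  | .bridging x y => .bridging (x + n * ((m : ℤ) * p)) (y + n * ((m : ℤ) * q))
  | .botPeriph u v => .botPeriph (u + n * ((m : ℤ) * p)) (v + n * ((m : ℤ) * p))
  | .topPeriph u v => .topPeriph (u + n * ((m : ℤ) * q)) (v + n * ((m : ℤ) * q))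

/-- Two arcs lie in the same `σ`-orbit. -/
def SameOrbit (m p q : ℕ) (a b : Arc) : Prop := ∃ n : ℤ, shiftArc m p q n a = b

/-- Possible sides of a face of an `(m+2)`-angulation of the strip: an arc, a bottom
boundary segment `[i,i+1] × {0}`, or a top boundary segment `[j,j+1] × {1}`. -/
inductive Side : Type
  | arc : Arc → Side
  | botSeg : ℤ → Side
  | topSeg : ℤ → Side
  deriving DecidableEq

/-- The endpoints of an arc. -/
def Arc.endpoints : Arc → Finset Pt
  | .bridging x y => {Pt.bot x, Pt.top y}
  | .botPeriph u v => {Pt.bot u, Pt.bot v}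
  | .topPeriph u v => {Pt.top u, Pt.top v}

/-- The endpoints of a side. -/
def Side.endpoints : Side → Finset Pt
  | .arc a => a.endpoints
  | .botSeg i => {Pt.bot i, Pt.bot (i + 1)}
  | .topSeg j => {Pt.top j, Pt.top (j + 1)}

/-- The `n`-th power of the shift `σ` acting on sides. -/
def shiftSide (m p q : ℕ) (n : ℤ) : Side → Side
  | .arc a => .arc (shiftArc m p q n a)
  | .botSeg i => .botSeg (i + n * ((m : ℤ) * p))
  | .topSeg j => .topSeg (j + n * ((m : ℤ) * q))

/-- A rational "angle key" recording the counterclockwise angular position, at a marked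
point, of an arc incident to that marked point (junk value `37` if the point is not an
endpoint of the arc).  Arcs incident to a common marked point are pairwise noncrossing
in an angulation, and their angular order around the point is strictly monotone in this
key. -/
def angKey : Arc → Pt → ℚ
  | .bridging x y, .bot z =>
      if z = x then 1 / 2 - (y : ℚ) / (2 * (1 + |(y : ℚ)|)) else 37
  | .bridging x y, .top z =>
      if z = y then -1 + (x : ℚ) / (2 * (1 + |(x : ℚ)|)) else 37
  | .botPeriph u v, .bot z =>
      if z = u then -1 / ((v : ℚ) - (u : ℚ))
      else if z = v then 2 - 1 / ((v : ℚ) - (u : ℚ)) else 37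
  | .topPeriph u v, .top z =>
      if z = u then 1 / ((v : ℚ) - (u : ℚ))
      else if z = v then -2 - 1 / ((v : ℚ) - (u : ℚ)) else 37
  | _, _ => 37

/-- `CwFollows a b pt` : the arcs `a` and `b` are both incident to the marked point
`pt` and `a` follows `b` in the clockwise direction around `pt` (i.e. the
counterclockwise angle of `a` at `pt` is smaller than that of `b`). -/
def CwFollows (a b : Arc) (pt : Pt) : Prop :=
  pt ∈ a.endpoints ∧ pt ∈ b.endpoints ∧ angKey a pt < angKey b pt

/-- An `(m+2)`-angulation of the annulus `A(p,q)`, presented in the universal cover: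
a `σ`-invariant set of pairwise noncrossing `m`-arcs with exactly `p + q` orbits
under `σ`, together with its set of faces; every face has exactly `m+2` sides, each
side of a face is an arc of the angulation or a boundary segment, each arc bounds
exactly two faces, each boundary segment bounds exactly one face, and around each
marked point a face has either no sides or exactly two sides (polygon condition). -/
structure Angulation (m p q : ℕ) : Type where
  arcs : Set Arc
  faces : Set (Finset Side)
  marc : ∀ a ∈ arcs, IsMArc m a
  shift_mem : ∀ a : Arc, a ∈ arcs ↔ shiftArc m p q 1 a ∈ arcs
  noncross : ∀ a ∈ arcs, ∀ b ∈ arcs, ¬ Cross a b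
  orbit_count : ∃ reps : Finset Arc, reps.card = p + q ∧ ↑reps ⊆ arcs ∧
      (∀ a ∈ arcs, ∃ r ∈ reps, SameOrbit m p q a r) ∧
      (∀ r ∈ reps, ∀ r' ∈ reps, SameOrbit m p q r r' → r = r')
  face_card : ∀ F ∈ faces, F.card = m + 2
  face_sides : ∀ F ∈ faces, ∀ s ∈ F,
      (∃ a ∈ arcs, s = Side.arc a) ∨ (∃ i : ℤ, s = Side.botSeg i) ∨ (∃ j : ℤ, s = Side.topSeg j)
  shift_face : ∀ F : Finset Side, F ∈ faces ↔ F.image (shiftSide m p q 1) ∈ faces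
  arc_two_faces : ∀ a ∈ arcs, ∃ F ∈ faces, ∃ G ∈ faces, F ≠ G ∧
      Side.arc a ∈ F ∧ Side.arc a ∈ G ∧ ∀ H ∈ faces, Side.arc a ∈ H → H = F ∨ H = G
  botSeg_face : ∀ i : ℤ, ∃! F : Finset Side, F ∈ faces ∧ Side.botSeg i ∈ F
  topSeg_face : ∀ j : ℤ, ∃! F : Finset Side, F ∈ faces ∧ Side.topSeg j ∈ F
  face_polygon : ∀ F ∈ faces, ∀ pt : Pt,
      (F.filter (fun s => pt ∈ s.endpoints)).card = 0 ∨
      (F.filter (fun s => pt ∈ s.endpoints)).card = 2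

end ClusterAnnulus

/-! A face `F` has 0 or 2 sides at every marked point. Counting, for each side of `F`, its
bottom endpoints `≤ j` shows that the bottom sides of `F` (boundary segments and bottom arcs)
whose span contains `[j, j+1]` are as many, mod 2, as the bridging sides of `F` with foot `≤ j`.

Without bridging arcs, every face therefore has an even number of bottom sides over `[0, 1]`.
Only finitely many sides lie over `[0, 1]` (there are finitely many `σ`-orbits and `σ` preserves
lengths), and counting pairs (face, such side) counts the segment `[0, 1]` once and every arc
twice: an odd number, which is absurd.

If all bridging arcs lie in the orbit of one of them, bridging arcs are determined by their
feet, which form the lattice `x₀ + m p ℤ`. For the leftmost foot `x₁` of a bridging side of `F`,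
every point of `[x₁, x₁ + m p)` lies under a bottom side of `F`, and no bottom side crosses the
bridging arcs at `x₁` and `x₁ + m p`; the maximal such sides tile `[x₁, x₁ + m p]` by pieces
of length `≡ 1 (mod m)`, so there are at least `m` of them. Exchanging top and bottom, `F` also
has at least `m` top sides, and `m + 2 = |F| ≥ 2 m + 1` contradicts `m ≥ 2`. -/

namespace ClusterAnnulus

open Finset

lemma exists_tiling (E : Finset (ℤ × ℤ)) (a b : ℤ) (hlt : ∀ e ∈ E, e.1 < e.2)
    (hnc : ∀ e ∈ E, ∀ f ∈ E, ¬ (e.1 < f.1 ∧ f.1 < e.2 ∧ e.2 < f.2))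
    (ha : ∀ e ∈ E, ¬ (e.1 < a ∧ a < e.2)) (hb : ∀ e ∈ E, ¬ (e.1 < b ∧ b < e.2))
    (hcov : ∀ j ∈ Ico a b, ∃ e ∈ E, j ∈ Ico e.1 e.2) :
    ∃ M ⊆ E, (∀ e ∈ M, e.1 < e.2) ∧
      (M : Set (ℤ × ℤ)).PairwiseDisjoint (fun e => Ico e.1 e.2) ∧
      M.biUnion (fun e => Ico e.1 e.2) = Ico a b := by
  set W := E.filter (fun e => a ≤ e.1 ∧ e.2 ≤ b)
  set M := W.filter (fun e => ∀ f ∈ W, f.1 ≤ e.1 → e.2 ≤ f.2 → f = e)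
  have hWE : W ⊆ E := filter_subset _ _
  have hMW : M ⊆ W := filter_subset _ _
  refine ⟨M, hMW.trans hWE, fun e he => hlt e (hWE (hMW he)), ?_, ?_⟩
  · intro e he f hf hne
    simp only [coe_filter, M] at he hf
    rw [Function.onFun, disjoint_left]
    intro j hje hjf
    rw [mem_Ico] at hje hjf
    have := hnc e (hWE he.1) f (hWE hf.1)
    have := hnc f (hWE hf.1) e (hWE he.1)
    have hnested : (e.1 ≤ f.1 ∧ f.2 ≤ e.2) ∨ (f.1 ≤ e.1 ∧ e.2 ≤ f.2) := by omega
    rcases hnested with h | h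
    · exact hne (hf.2 e he.1 h.1 h.2)
    · exact hne (he.2 f hf.1 h.1 h.2).symm
  · ext j
    simp only [mem_biUnion, mem_Ico]
    constructor
    · rintro ⟨e, he, hj⟩
      have := (mem_filter.1 (hMW he)).2
      omega
    · intro hj
      obtain ⟨e₀, he₀, hje₀⟩ := hcov j (mem_Ico.2 hj)
      rw [mem_Ico] at hje₀
      have hW : ∀ e ∈ E, e.1 ≤ j → j < e.2 → e ∈ W := fun e he h1 h2 =>
        mem_filter.2 ⟨he, by have := ha e he; have := hb e he; omega⟩
      obtain ⟨e, he, hmax⟩ := exists_max_image (W.filter (fun e => e.1 ≤ j ∧ j < e.2))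
        (fun e => e.2 - e.1) ⟨e₀, mem_filter.2 ⟨hW e₀ he₀ hje₀.1 hje₀.2, hje₀⟩⟩
      rw [mem_filter] at he
      refine ⟨e, mem_filter.2 ⟨he.1, fun f hf h1 h2 => ?_⟩, he.2⟩
      have := hmax f (mem_filter.2 ⟨hf, by omega⟩)
      exact Prod.ext (by omega) (by omega)

lemma le_card_of_tiling (M : Finset (ℤ × ℤ)) (m : ℕ) (a b : ℤ) (hab : a < b)
    (hm : (m : ℤ) ∣ b - a) (hlt : ∀ e ∈ M, e.1 < e.2)
    (hlen : ∀ e ∈ M, (m : ℤ) ∣ e.2 - e.1 - 1)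
    (hdisj : (M : Set (ℤ × ℤ)).PairwiseDisjoint (fun e => Ico e.1 e.2))
    (htile : M.biUnion (fun e => Ico e.1 e.2) = Ico a b) : m ≤ #M := by
  have hsum : b - a = ∑ e ∈ M, (e.2 - e.1) := by
    rw [← Int.card_Ico_of_le _ _ hab.le, ← htile, card_biUnion hdisj, Nat.cast_sum]
    exact sum_congr rfl fun e he => Int.card_Ico_of_le _ _ (hlt e he).le
  have hdvd : (m : ℤ) ∣ #M := by
    have : (m : ℤ) ∣ ∑ e ∈ M, (e.2 - e.1 - 1) := dvd_sum hlen
    rw [sum_sub_distrib, ← hsum, sum_const, nsmul_one] at this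
    simpa using dvd_sub hm this
  have hne : M.Nonempty := by
    have : a ∈ M.biUnion (fun e => Ico e.1 e.2) := htile ▸ mem_Ico.2 ⟨le_rfl, hab⟩
    obtain ⟨e, he, -⟩ := mem_biUnion.1 this
    exact ⟨e, he⟩
  exact Nat.le_of_dvd hne.card_pos (Int.natCast_dvd_natCast.1 hdvd)

section Shift

variable {m p q : ℕ}

@[simp]
lemma shiftArc_zero (a : Arc) : shiftArc m p q 0 a = a := by
  cases a <;> simp [shiftArc]

lemma shiftArc_shiftArc (n k : ℤ) (a : Arc) :
    shiftArc m p q k (shiftArc m p q n a) = shiftArc m p q (n + k) a := by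
  cases a <;> simp only [shiftArc, Arc.bridging.injEq, Arc.botPeriph.injEq,
    Arc.topPeriph.injEq] <;> constructor <;> ring

lemma Angulation.shiftArc_mem (Γ : Angulation m p q) (n : ℤ) {a : Arc} (ha : a ∈ Γ.arcs) :
    shiftArc m p q n a ∈ Γ.arcs := by
  induction n using Int.induction_on with
  | zero => simpa
  | succ n ih => rw [← shiftArc_shiftArc]; exact (Γ.shift_mem _).1 ih
  | pred n ih =>
    rw [Γ.shift_mem, shiftArc_shiftArc, sub_add_cancel]
    exact ih

lemma Angulation.mem_arcs_of_mem_face (Γ : Angulation m p q) {F : Finset Side}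
    (hF : F ∈ Γ.faces) {a : Arc} (ha : Side.arc a ∈ F) : a ∈ Γ.arcs := by
  obtain ⟨b, hb, hab⟩ | ⟨i, hi⟩ | ⟨j, hj⟩ := Γ.face_sides F hF _ ha
  · exact Side.arc.inj hab ▸ hb
  · cases hi
  · cases hj

end Shift

def Pt.flip : Pt → Pt
  | .bot x => .top x
  | .top x => .bot x

def Arc.flip : Arc → Arc
  | .bridging x y => .bridging y x
  | .botPeriph u v => .topPeriph u v
  | .topPeriph u v => .botPeriph u v

def Side.flip : Side → Side
  | .arc a => .arc a.flip
  | .botSeg i => .topSeg i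
  | .topSeg j => .botSeg j

@[simp]
lemma Arc.flip_flip (a : Arc) : a.flip.flip = a := by cases a <;> rfl

@[simp]
lemma Side.flip_flip (s : Side) : s.flip.flip = s := by
  cases s <;> simp [Side.flip]

lemma Arc.flip_injective : Function.Injective Arc.flip :=
  Function.LeftInverse.injective Arc.flip_flip

lemma Side.flip_injective : Function.Injective Side.flip :=
  Function.LeftInverse.injective Side.flip_flip

lemma Side.mem_image_flip {s : Side} {F : Finset Side} : s ∈ F.image Side.flip ↔ s.flip ∈ F :=
  ⟨fun h => by obtain ⟨t, ht, rfl⟩ := mem_image.1 h; simpa,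
    fun h => mem_image.2 ⟨_, h, Side.flip_flip s⟩⟩

@[simp]
lemma Side.image_flip_image_flip (F : Finset Side) : (F.image Side.flip).image Side.flip = F := by
  ext s; simp

lemma Side.mem_endpoints_flip {s : Side} {x : Pt} :
    x.flip ∈ s.flip.endpoints ↔ x ∈ s.endpoints := by
  cases x <;> rcases s with (_ | _ | _) | _ | _ <;>
    simp [Side.flip, Arc.flip, Pt.flip, Side.endpoints, Arc.endpoints]

lemma isMArc_flip {m : ℕ} {a : Arc} : IsMArc m a.flip ↔ IsMArc m a := by
  cases a
  · exact ⟨Int.ModEq.symm, Int.ModEq.symm⟩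
  all_goals rfl

lemma cross_flip {a b : Arc} : Cross a.flip b.flip ↔ Cross a b := by
  cases a <;> cases b <;> simp only [Cross, Arc.flip, mul_comm]

lemma flip_shiftArc {m p q : ℕ} (n : ℤ) (a : Arc) :
    (shiftArc m p q n a).flip = shiftArc m q p n a.flip := by
  cases a <;> rfl

lemma flip_shiftSide {m p q : ℕ} (n : ℤ) (s : Side) :
    (shiftSide m p q n s).flip = shiftSide m q p n s.flip := by
  rcases s with a | _ | _
  · exact congrArg Side.arc (flip_shiftArc n a)
  all_goals rfl

lemma sameOrbit_flip {m p q : ℕ} {a b : Arc} :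
    SameOrbit m q p a.flip b.flip ↔ SameOrbit m p q a b := by
  simp only [SameOrbit, ← flip_shiftArc, Arc.flip_injective.eq_iff]


def Angulation.flip {m p q : ℕ} (Γ : Angulation m p q) : Angulation m q p where
  arcs := {a | a.flip ∈ Γ.arcs}
  faces := {F | F.image Side.flip ∈ Γ.faces}
  marc a ha := isMArc_flip.1 (Γ.marc _ ha)
  shift_mem a := by
    simp only [Set.mem_ofPred_eq, flip_shiftArc]
    exact Γ.shift_mem a.flip
  noncross a ha b hb := cross_flip.not.1 (Γ.noncross _ ha _ hb)
  orbit_count := by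
    obtain ⟨reps, hcard, hsub, hcover, huniq⟩ := Γ.orbit_count
    refine ⟨reps.image Arc.flip, ?_, ?_, ?_, ?_⟩
    · rw [card_image_of_injective _ Arc.flip_injective, hcard, add_comm]
    · intro a ha
      obtain ⟨r, hr, rfl⟩ := mem_image.1 (mem_coe.1 ha)
      simpa using hsub hr
    · intro a ha
      obtain ⟨r, hr, hor⟩ := hcover _ ha
      exact ⟨r.flip, mem_image_of_mem _ hr, by simpa using sameOrbit_flip.2 hor⟩
    · simp only [mem_image]
      rintro _ ⟨r, hr, rfl⟩ _ ⟨r', hr', rfl⟩ h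
      rw [huniq r hr r' hr' (sameOrbit_flip.1 h)]
  face_card F hF := by
    rw [← Γ.face_card _ hF, card_image_of_injective _ Side.flip_injective]
  face_sides F hF s hs := by
    rcases Γ.face_sides _ hF s.flip (mem_image_of_mem _ hs) with
      ⟨a, ha, h⟩ | ⟨i, h⟩ | ⟨j, h⟩ <;> rw [← Side.flip_flip s, h]
    · exact Or.inl ⟨a.flip, by simpa using ha, rfl⟩
    · exact Or.inr (Or.inr ⟨i, rfl⟩)
    · exact Or.inr (Or.inl ⟨j, rfl⟩)
  shift_face F := by
    simp only [Set.mem_ofPred_eq, image_image, Function.comp_def, flip_shiftSide]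
    rw [Γ.shift_face, image_image]
    rfl
  arc_two_faces a ha := by
    obtain ⟨F, hF, G, hG, hFG, haF, haG, huniq⟩ := Γ.arc_two_faces _ ha
    refine ⟨F.image Side.flip, by simpa using hF, G.image Side.flip, by simpa using hG,
      fun h => hFG (by simpa using congrArg (Finset.image Side.flip) h),
      Side.mem_image_flip.2 haF, Side.mem_image_flip.2 haG, fun H hH haH => ?_⟩
    rcases huniq _ hH (Side.mem_image_flip.2 (by simpa [Side.flip] using haH)) with h | h <;>
      [left; right] <;> rw [← h, Side.image_flip_image_flip]
  botSeg_face i := by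
    have := (Function.Involutive.bijective Side.image_flip_image_flip).existsUnique_iff
      (p := fun G => G ∈ Γ.faces ∧ Side.topSeg i ∈ G) |>.1 (Γ.topSeg_face i)
    simp only [Side.mem_image_flip] at this
    exact this
  topSeg_face j := by
    have := (Function.Involutive.bijective Side.image_flip_image_flip).existsUnique_iff
      (p := fun G => G ∈ Γ.faces ∧ Side.botSeg j ∈ G) |>.1 (Γ.botSeg_face j)
    simp only [Side.mem_image_flip] at this
    exact this
  face_polygon F hF x := by
    have hfilter : (F.image Side.flip).filter (fun s => x.flip ∈ s.endpoints) =
        (F.filter (fun s => x ∈ s.endpoints)).image Side.flip := by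
      rw [filter_image]
      simp only [Side.mem_endpoints_flip]
    rw [← card_image_of_injective _ Side.flip_injective, ← hfilter]
    exact Γ.face_polygon _ hF x.flip

/-- The interval `(u, v)` of the bottom line cut off by a bottom side; empty for the other sides. -/
def Side.botSpan : Side → Finset (ℤ × ℤ)
  | .botSeg i => {(i, i + 1)}
  | .arc (.botPeriph u v) => {(u, v)}
  | _ => ∅

def Side.botFoot : Side → Finset ℤ
  | .arc (.bridging x _) => {x}
  | _ => ∅

def Side.BotStraddles (j : ℤ) (s : Side) : Prop := ∃ e ∈ s.botSpan, e.1 ≤ j ∧ j < e.2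

def Side.BotFootLE (j : ℤ) (s : Side) : Prop := ∃ x ∈ s.botFoot, x ≤ j

def Pt.IsBotLE (j : ℤ) : Pt → Prop
  | .bot z => z ≤ j
  | .top _ => False

instance (j : ℤ) : DecidablePred (Side.BotStraddles j) := fun s =>
  inferInstanceAs (Decidable (∃ e ∈ s.botSpan, _))

instance (j : ℤ) : DecidablePred (Side.BotFootLE j) := fun s =>
  inferInstanceAs (Decidable (∃ x ∈ s.botFoot, _))

instance (j : ℤ) : DecidablePred (Pt.IsBotLE j)
  | .bot z => inferInstanceAs (Decidable (z ≤ j))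
  | .top _ => inferInstanceAs (Decidable False)

lemma Side.mem_botFoot {s : Side} {x : ℤ} :
    x ∈ s.botFoot ↔ ∃ y, s = .arc (.bridging x y) := by
  rcases s with (_ | _ | _) | _ | _ <;> simp [Side.botFoot, eq_comm]

lemma Side.even_card_endpoints_filter_isBotLE (s : Side) (hs : ∀ e ∈ s.botSpan, e.1 < e.2)
    (j : ℤ) :
    Even (#(s.endpoints.filter (Pt.IsBotLE j)) + (if s.BotStraddles j then 1 else 0) +
      (if s.BotFootLE j then 1 else 0)) := by
  -- phrased with `u ≤ j` rather than `Pt.IsBotLE j (.bot u)`, whose decidability instance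
  -- `split_ifs` would not identify with the one in `Side.BotStraddles`
  have hbot : ∀ u v : ℤ, u ≠ v → #(({.bot u, .bot v} : Finset Pt).filter (Pt.IsBotLE j)) =
      (if u ≤ j then 1 else 0) + (if v ≤ j then 1 else 0) := fun u v h => by
    rw [card_filter, sum_pair (by simpa using h)]
    rfl
  rcases s with (⟨x, y⟩ | ⟨u, v⟩ | ⟨u, v⟩) | i | i <;>
    simp only [Side.botSpan, mem_singleton, forall_eq, notMem_empty, IsEmpty.forall_iff,
      implies_true] at hs <;>
    simp only [Side.endpoints, Arc.endpoints, Side.BotStraddles, Side.BotFootLE, Side.botSpan,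
      Side.botFoot, mem_singleton, exists_eq_left, notMem_empty, false_and, exists_false,
      if_false, add_zero, Nat.even_iff]
  case arc.topPeriph | topSeg => simp [filter_insert, filter_singleton, Pt.IsBotLE]
  case arc.bridging => simp [filter_insert, filter_singleton, Pt.IsBotLE]; split_ifs <;> simp
  all_goals rw [hbot _ _ (by omega)]; split_ifs <;> omega

section Face

variable {m p q : ℕ} (Γ : Angulation m p q) {F : Finset Side}

lemma Angulation.even_sum_card_endpoints_filter (hF : F ∈ Γ.faces) (P : Pt → Prop)
    [DecidablePred P] : Even (∑ s ∈ F, #(s.endpoints.filter P)) := by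
  set T := (F.biUnion Side.endpoints).filter P
  have hdc := sum_card_bipartiteAbove_eq_sum_card_bipartiteBelow (s := F) (t := T)
    (r := fun s x => x ∈ s.endpoints)
  have hT : ∀ s ∈ F,
      T.bipartiteAbove (fun s x => x ∈ s.endpoints) s = s.endpoints.filter P := by
    intro s hs
    ext x
    simp only [bipartiteAbove, T, mem_filter, mem_biUnion]
    exact ⟨fun h => ⟨h.2, h.1.2⟩, fun h => ⟨⟨⟨s, hs, h.1⟩, h.2⟩, h.1⟩⟩
  rw [sum_congr rfl fun s hs => by rw [hT s hs]] at hdc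
  rw [hdc]
  refine even_sum _ fun x _ => ?_
  rcases Γ.face_polygon F hF x with h | h <;> simp [bipartiteBelow, h]

def Angulation.IsBotSpan (e : ℤ × ℤ) : Prop :=
  e.2 = e.1 + 1 ∨ Arc.botPeriph e.1 e.2 ∈ Γ.arcs

variable {Γ}

lemma Angulation.isBotSpan_of_mem_face (hF : F ∈ Γ.faces) {s : Side} (hs : s ∈ F)
    {e : ℤ × ℤ} (he : e ∈ s.botSpan) : Γ.IsBotSpan e := by
  rcases s with (_ | ⟨u, v⟩ | _) | i | i <;>
    simp only [Side.botSpan, mem_singleton, notMem_empty] at he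
  · exact Or.inr (he ▸ Γ.mem_arcs_of_mem_face hF hs)
  · exact Or.inl (he ▸ rfl)

lemma Angulation.IsBotSpan.dvd_sub_one {e : ℤ × ℤ} (he : Γ.IsBotSpan e) :
    (m : ℤ) ∣ e.2 - e.1 - 1 := by
  rcases he with h | h
  · simp [h]
  · obtain ⟨k, -, hk⟩ := Γ.marc _ h
    exact ⟨k, by rw [hk]; ring⟩

lemma Angulation.IsBotSpan.lt {e : ℤ × ℤ} (he : Γ.IsBotSpan e) : e.1 < e.2 := by
  rcases he with h | h
  · omega
  · obtain ⟨k, hk, hv⟩ := Γ.marc _ h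
    nlinarith [(Int.natCast_nonneg m)]

lemma Angulation.IsBotSpan.not_cross {e f : ℤ × ℤ} (he : Γ.IsBotSpan e)
    (hf : Γ.IsBotSpan f) : ¬ (e.1 < f.1 ∧ f.1 < e.2 ∧ e.2 < f.2) := by
  rcases he with he | he
  · omega
  rcases hf with hf | hf
  · omega
  exact fun h => Γ.noncross _ he _ hf (Or.inl h)

lemma Angulation.IsBotSpan.not_cross_bridging {e : ℤ × ℤ} (he : Γ.IsBotSpan e) {x y : ℤ}
    (hxy : Arc.bridging x y ∈ Γ.arcs) : ¬ (e.1 < x ∧ x < e.2) := by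
  rcases he with he | he
  · omega
  · exact Γ.noncross _ he _ hxy

variable (Γ)

lemma Angulation.even_card_botStraddles_add_card_botFootLE (hF : F ∈ Γ.faces) (j : ℤ) :
    Even (#(F.filter (·.BotStraddles j)) + #(F.filter (·.BotFootLE j))) := by
  have hside : Even (∑ s ∈ F, (#(s.endpoints.filter (Pt.IsBotLE j)) +
      (if s.BotStraddles j then 1 else 0) + (if s.BotFootLE j then 1 else 0))) :=
    even_sum _ fun s hs => s.even_card_endpoints_filter_isBotLE
      (fun e he => (Γ.isBotSpan_of_mem_face hF hs he).lt) j
  rw [sum_add_distrib, sum_add_distrib, ← card_filter, ← card_filter, add_assoc,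
    Nat.even_add] at hside
  exact hside.1 (Γ.even_sum_card_endpoints_filter hF _)

end Face

def Arc.botLength : Arc → ℤ
  | .botPeriph u v => v - u
  | _ => 0

@[simp]
lemma Arc.botLength_shiftArc {m p q : ℕ} (n : ℤ) (a : Arc) :
    (shiftArc m p q n a).botLength = a.botLength := by
  cases a <;> simp [shiftArc, Arc.botLength]

section NoBridging

variable {m p q : ℕ} (Γ : Angulation m p q)

lemma Angulation.exists_botPeriph_length_le :
    ∃ L : ℤ, ∀ u v, Arc.botPeriph u v ∈ Γ.arcs → v - u ≤ L := by
  obtain ⟨reps, -, -, hcover, -⟩ := Γ.orbit_count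
  obtain ⟨L, hL⟩ := (reps.image Arc.botLength).bddAbove
  refine ⟨L, fun u v h => ?_⟩
  obtain ⟨r, hr, n, hn⟩ := hcover _ h
  have := hL (mem_coe.2 (mem_image_of_mem _ hr))
  rwa [← hn, Arc.botLength_shiftArc] at this

lemma Angulation.finite_facesAt (s : Side) : {H | H ∈ Γ.faces ∧ s ∈ H}.Finite := by
  rcases s with a | i | j
  · by_cases ha : a ∈ Γ.arcs
    · obtain ⟨F, -, G, -, -, -, -, huniq⟩ := Γ.arc_two_faces a ha
      exact (Set.toFinite {F, G}).subset fun H hH => huniq H hH.1 hH.2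
    · exact Set.finite_empty.subset fun H hH => ha (Γ.mem_arcs_of_mem_face hH.1 hH.2)
  · obtain ⟨F, -, huniq⟩ := Γ.botSeg_face i
    exact (Set.finite_singleton F).subset fun H hH => huniq H hH
  · obtain ⟨F, -, huniq⟩ := Γ.topSeg_face j
    exact (Set.finite_singleton F).subset fun H hH => huniq H hH

noncomputable def Angulation.facesAt (s : Side) : Finset (Finset Side) :=
  (Γ.finite_facesAt s).toFinset

variable {Γ}

lemma Angulation.mem_facesAt {s : Side} {H : Finset Side} :
    H ∈ Γ.facesAt s ↔ H ∈ Γ.faces ∧ s ∈ H :=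
  Set.Finite.mem_toFinset _

lemma Angulation.card_facesAt_botSeg (i : ℤ) : #(Γ.facesAt (.botSeg i)) = 1 := by
  obtain ⟨F, hF, huniq⟩ := Γ.botSeg_face i
  exact card_eq_one.2 ⟨F, ext fun H => by
    rw [Angulation.mem_facesAt, mem_singleton]
    exact ⟨huniq H, fun h => h ▸ hF⟩⟩

lemma Angulation.card_facesAt_arc {a : Arc} (ha : a ∈ Γ.arcs) : #(Γ.facesAt (.arc a)) = 2 := by
  obtain ⟨F, hF, G, hG, hFG, haF, haG, huniq⟩ := Γ.arc_two_faces a ha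
  refine card_eq_two.2 ⟨F, G, hFG, ext fun H => ?_⟩
  rw [Angulation.mem_facesAt, mem_insert, mem_singleton]
  exact ⟨fun h => huniq H h.1 h.2, by rintro (rfl | rfl) <;> tauto⟩

variable (Γ)

lemma Angulation.finite_setOf_botStraddles (j : ℤ) :
    {s : Side | s.BotStraddles j ∧ ∃ H ∈ Γ.faces, s ∈ H}.Finite := by
  obtain ⟨L, hL⟩ := Γ.exists_botPeriph_length_le
  refine (insert (Side.botSeg j) ((Icc (j - L) j ×ˢ Icc (j + 1) (j + L)).image fun e =>
    Side.arc (.botPeriph e.1 e.2))).finite_toSet.subset ?_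
  rintro s ⟨⟨e, he, hje⟩, H, hH, hs⟩
  rcases s with (_ | ⟨u, v⟩ | _) | i | i <;>
    simp only [Side.botSpan, mem_singleton, notMem_empty] at he <;> subst he
  · have := hL u v (Γ.mem_arcs_of_mem_face hH hs)
    simp only [coe_insert, coe_image, Set.mem_insert_iff, Set.mem_image, mem_coe, mem_product,
      mem_Icc]
    exact Or.inr ⟨(u, v), ⟨⟨by omega, hje.1⟩, ⟨hje.2, by omega⟩⟩, rfl⟩
  · simp only at hje
    simp [show i = j by omega]

lemma Angulation.sum_card_facesAt_eq_sum_card_filter_mem (C : Finset Side) :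
    ∑ s ∈ C, #(Γ.facesAt s) = ∑ H ∈ C.biUnion Γ.facesAt, #(C.filter (· ∈ H)) := by
  refine Eq.trans (sum_congr rfl fun s hs => congrArg card (ext fun H => ?_))
    (sum_card_bipartiteAbove_eq_sum_card_bipartiteBelow (r := fun s H => s ∈ H))
  simp only [bipartiteAbove, mem_filter, mem_biUnion, Angulation.mem_facesAt]
  exact ⟨fun h => ⟨⟨s, hs, h⟩, h.2⟩, fun ⟨⟨_, _, hH, _⟩, hsH⟩ => ⟨hH, hsH⟩⟩

theorem Angulation.exists_bridging : ∃ x y, Arc.bridging x y ∈ Γ.arcs := by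
  by_contra! hno
  have hS := Γ.finite_setOf_botStraddles 0
  set C := hS.toFinset
  have hmemC : ∀ H ∈ Γ.faces, ∀ s ∈ H, s ∈ C ↔ s.BotStraddles 0 := fun H hH s hs => by
    simpa [C] using fun _ => ⟨H, hH, hs⟩
  have heven : ∀ H ∈ Γ.faces, Even #(C.filter (· ∈ H)) := by
    intro H hH
    have hfoot : H.filter (·.BotFootLE 0) = ∅ :=
      filter_eq_empty_iff.2 fun s hs ⟨x, hx, _⟩ => by
        obtain ⟨y, rfl⟩ := Side.mem_botFoot.1 hx
        exact hno x y (Γ.mem_arcs_of_mem_face hH hs)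
    have := Γ.even_card_botStraddles_add_card_botFootLE hH 0
    rwa [hfoot, card_empty, add_zero, ← filter_congr (hmemC H hH), filter_mem_eq_inter,
      inter_comm, ← filter_mem_eq_inter] at this
  -- the segment `[0, 1]` lies in one face, every other side of `C` is an arc lying in two
  have hodd : Odd (∑ s ∈ C, #(Γ.facesAt s)) := by
    obtain ⟨F₀, hF₀, -⟩ := Γ.botSeg_face 0
    have h0 : Side.botSeg 0 ∈ C :=
      (hmemC F₀ hF₀.1 _ hF₀.2).2 ⟨(0, 1), by simp [Side.botSpan]⟩
    rw [← add_sum_erase _ _ h0, Γ.card_facesAt_botSeg]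
    refine (even_sum _ fun s hs => ?_).one_add
    obtain ⟨hs0, hsC⟩ := mem_erase.1 hs
    obtain ⟨⟨e, he, he0⟩, H, hH, hsH⟩ := hS.mem_toFinset.1 hsC
    rcases s with a | i | i
    · rw [Γ.card_facesAt_arc (Γ.mem_arcs_of_mem_face hH hsH)]
      exact even_two
    · simp only [Side.botSpan, mem_singleton] at he
      subst he
      exact absurd (by simp only at he0; omega) (hs0 ∘ congrArg Side.botSeg)
    · simp [Side.botSpan] at he
  rw [Γ.sum_card_facesAt_eq_sum_card_filter_mem] at hodd
  refine Nat.not_even_iff_odd.2 hodd (even_sum _ fun H hH => heven H ?_)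
  obtain ⟨s, -, hH⟩ := mem_biUnion.1 hH
  exact (Angulation.mem_facesAt.1 hH).1

end NoBridging

lemma Side.card_botSpan_add_card_botSpan_flip_le_one (s : Side) :
    #s.botSpan + #s.flip.botSpan ≤ 1 := by
  rcases s with (_ | _ | _) | _ | _ <;> simp [Side.botSpan, Side.flip, Arc.flip]

lemma card_biUnion_botSpan_add_card_biUnion_botSpan_flip_lt {F : Finset Side} {x y : ℤ}
    (hβ : Side.arc (.bridging x y) ∈ F) :
    #(F.biUnion Side.botSpan) + #(F.biUnion fun s => s.flip.botSpan) < #F := by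
  calc #(F.biUnion Side.botSpan) + #(F.biUnion fun s => s.flip.botSpan)
      ≤ ∑ s ∈ F, (#s.botSpan + #s.flip.botSpan) := by
        rw [sum_add_distrib]; exact add_le_add card_biUnion_le card_biUnion_le
    _ < ∑ s ∈ F, 1 := sum_lt_sum (fun s _ => s.card_botSpan_add_card_botSpan_flip_le_one)
        ⟨_, hβ, by simp [Side.botSpan, Side.flip, Arc.flip]⟩
    _ = #F := (card_eq_sum_ones F).symm

lemma bridging_eq_of_sameOrbit {m p q : ℕ} (hmp : 0 < m * p) {x₀ y₀ x y x' y' : ℤ}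
    (h : SameOrbit m p q (.bridging x₀ y₀) (.bridging x y))
    (h' : SameOrbit m p q (.bridging x₀ y₀) (.bridging x' y'))
    (hle : x ≤ x') (hlt : x' < x + m * p) : x' = x ∧ y' = y := by
  obtain ⟨n, hn⟩ := h
  obtain ⟨n', hn'⟩ := h'
  simp only [shiftArc, Arc.bridging.injEq] at hn hn'
  have hD : (0 : ℤ) < m * p := by exact_mod_cast hmp
  have : n ≤ n' := le_of_mul_le_mul_right (by omega) hD
  have : n' < n + 1 := lt_of_mul_lt_mul_right (by rw [add_mul]; omega) hD.le
  obtain rfl : n' = n := by omega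
  exact ⟨hn'.1.symm.trans hn.1, hn'.2.symm.trans hn.2⟩

section SingleOrbit

variable {m p q : ℕ} (Γ : Angulation m p q) {F : Finset Side}

lemma Angulation.exists_botSpan_of_card_botFootLE_eq_one (hF : F ∈ Γ.faces) {j : ℤ}
    (h : #(F.filter (·.BotFootLE j)) = 1) :
    ∃ e ∈ F.biUnion Side.botSpan, j ∈ Ico e.1 e.2 := by
  have hpar := Γ.even_card_botStraddles_add_card_botFootLE hF j
  rw [h, Nat.even_add_one, Nat.not_even_iff_odd] at hpar
  obtain ⟨s, hs⟩ := card_pos.1 hpar.pos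
  obtain ⟨hs, e, he, hje⟩ := mem_filter.1 hs
  exact ⟨e, mem_biUnion.2 ⟨s, hs, he⟩, mem_Ico.2 hje⟩

theorem Angulation.le_card_biUnion_botSpan_of_sameOrbit (hm : 0 < m) (hp : 0 < p) {x₀ y₀ : ℤ}
    (hall : ∀ x y, Arc.bridging x y ∈ Γ.arcs →
      SameOrbit m p q (.bridging x₀ y₀) (.bridging x y))
    (hF : F ∈ Γ.faces) (hβ : Side.arc (.bridging x₀ y₀) ∈ F) :
    m ≤ #(F.biUnion Side.botSpan) := by
  have hmp : 0 < m * p := Nat.mul_pos hm hp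
  set E := F.biUnion Side.botSpan
  set X := F.biUnion Side.botFoot
  have hX : X.Nonempty := ⟨x₀, mem_biUnion.2 ⟨_, hβ, by simp [Side.botFoot]⟩⟩
  obtain ⟨s₁, hs₁, hx₁⟩ := mem_biUnion.1 (X.min'_mem hX)
  set x₁ := X.min' hX
  obtain ⟨y₁, rfl⟩ := Side.mem_botFoot.1 hx₁
  have hβ₁ := hall _ _ (Γ.mem_arcs_of_mem_face hF hs₁)
  have hfoot : ∀ j ∈ Ico x₁ (x₁ + m * p),
      F.filter (·.BotFootLE j) = {.arc (.bridging x₁ y₁)} := by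
    intro j hj
    rw [mem_Ico] at hj
    ext s
    rw [mem_filter, mem_singleton]
    constructor
    · rintro ⟨hs, x, hx, hxj⟩
      obtain ⟨y, rfl⟩ := Side.mem_botFoot.1 hx
      obtain ⟨rfl, rfl⟩ := bridging_eq_of_sameOrbit hmp hβ₁
        (hall _ _ (Γ.mem_arcs_of_mem_face hF hs)) (X.min'_le _ (mem_biUnion.2 ⟨_, hs, hx⟩))
        (by omega)
      rfl
    · rintro rfl
      exact ⟨hs₁, x₁, hx₁, hj.1⟩
  have hspan : ∀ e ∈ E, Γ.IsBotSpan e := fun e he => by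
    obtain ⟨s, hs, he⟩ := mem_biUnion.1 he
    exact Γ.isBotSpan_of_mem_face hF hs he
  have hwall : ∀ n : ℤ, ∀ e ∈ E,
      ¬ (e.1 < x₁ + n * (m * p) ∧ x₁ + n * (m * p) < e.2) :=
    fun n e he => (hspan e he).not_cross_bridging
      (Γ.shiftArc_mem n (Γ.mem_arcs_of_mem_face hF hs₁))
  obtain ⟨M, hME, hMlt, hdisj, htile⟩ := exists_tiling E x₁ (x₁ + m * p)
    (fun e he => (hspan e he).lt) (fun e he f hf => (hspan e he).not_cross (hspan f hf))
    (by simpa using hwall 0) (by simpa using hwall 1)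
    (fun j hj => Γ.exists_botSpan_of_card_botFootLE_eq_one hF (by rw [hfoot j hj, card_singleton]))
  calc m ≤ #M := le_card_of_tiling M m x₁ (x₁ + m * p) (by simp; positivity) (by simp)
        hMlt (fun e he => (hspan e (hME he)).dvd_sub_one) hdisj htile
    _ ≤ #E := card_le_card hME

theorem Angulation.le_card_biUnion_botSpan_flip_of_sameOrbit (hm : 0 < m) (hq : 0 < q)
    {x₀ y₀ : ℤ} (hall : ∀ x y, Arc.bridging x y ∈ Γ.arcs →
      SameOrbit m p q (.bridging x₀ y₀) (.bridging x y))
    (hF : F ∈ Γ.faces) (hβ : Side.arc (.bridging x₀ y₀) ∈ F) :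
    m ≤ #(F.biUnion fun s => s.flip.botSpan) := by
  rw [← image_biUnion]
  exact Γ.flip.le_card_biUnion_botSpan_of_sameOrbit hm hq (x₀ := y₀) (y₀ := x₀)
    (fun x y h => sameOrbit_flip.2 (hall y x h)) (by simpa [Angulation.flip] using hF)
    (Side.mem_image_flip.2 hβ)

end SingleOrbit

/-- Let `m ≥ 2`.  Every `(m+2)`-angulation `Γ` of the annulus
`A(p,q)` contains at least two distinct `σ`-orbits of bridging arcs. -/
theorem exists_two_bridging_orbits (m p q : ℕ) (hm : 2 ≤ m) (hp : 1 ≤ p) (hq : 1 ≤ q)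
    (Γ : Angulation m p q) :
    ∃ a ∈ Γ.arcs, ∃ b ∈ Γ.arcs,
      a.IsBridging ∧ b.IsBridging ∧ ¬ SameOrbit m p q a b := by
  by_contra! hsingle
  obtain ⟨x₀, y₀, hβ⟩ := Γ.exists_bridging
  have hall : ∀ x y, Arc.bridging x y ∈ Γ.arcs →
      SameOrbit m p q (.bridging x₀ y₀) (.bridging x y) :=
    fun x y h => hsingle _ hβ _ h trivial trivial
  obtain ⟨F, hF, -, -, -, hβF, -, -⟩ := Γ.arc_two_faces _ hβ
  have hbot := Γ.le_card_biUnion_botSpan_of_sameOrbit (by omega) hp hall hF hβF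
  have htop := Γ.le_card_biUnion_botSpan_flip_of_sameOrbit (by omega) hq hall hF hβF
  have hsides := card_biUnion_botSpan_add_card_biUnion_botSpan_flip_lt hβF
  have hcard := Γ.face_card F hF
  omega

end ClusterAnnulus
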